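/- Suppose A, B, u, V, w, W are sufficiently smooth on ℝ⁴ with B antisymmetric in its two vectorfield indices, and suppose A takes invertible matrix values and satisfies the linear equation ∇ΔA + ΔA·V − ∇A·w + A·W = curl B. Then u solves Δ²u = Δ(V·∇u) + div(w∇u) + W·∇u if and only if div[∇(AΔu) − 2∇A Δu + ΔA ∇u − A w ∇u + ∇A(V·∇u) − A∇(V·∇u) − B·∇u] = 0. -/

import Mathlib

open MeasureTheory Metric Set ENNReal NNReal

noncomputable section

/-- Four dimensional Euclidean space. -/
abbrev E4 : Type := EuclideanSpace ℝ (Fin 4)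

/-- The `k`-th partial derivative of a function on `ℝ⁴`. -/
def pd {E : Type*} [NormedAddCommGroup E] [NormedSpace ℝ E] (k : Fin 4) (f : E4 → E) : E4 → E :=
  fun x => fderiv ℝ f x (EuclideanSpace.single k 1)

/-- The Laplacian on `ℝ⁴`. -/
def lap {E : Type*} [NormedAddCommGroup E] [NormedSpace ℝ E] (f : E4 → E) : E4 → E :=
  fun x => ∑ k : Fin 4, pd k (pd k f) x

/-- The Bilaplacian on `ℝ⁴`. -/
def bilap {E : Type*} [NormedAddCommGroup E] [NormedSpace ℝ E] (f : E4 → E) : E4 → E :=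
  lap (lap f)
/-- A matrix (given by its entries) acting on a vector. -/
def mvec {m : ℕ} (M : Fin m → Fin m → ℝ) (v : Fin m → ℝ) : Fin m → ℝ :=
  fun i => ∑ j, M i j * v j

/-- Product of two matrices given by their entries. -/
def mmul {m : ℕ} (M N : Fin m → Fin m → ℝ) : Fin m → Fin m → ℝ :=
  fun i j => ∑ r, M i r * N r j

section helpers
variable {E : Type*} [NormedAddCommGroup E] [NormedSpace ℝ E]
lemma pd_contDiff {f : E4 → E} (hf : ContDiff ℝ (⊤ : ℕ∞) f) (k : Fin 4) : ContDiff ℝ (⊤ : ℕ∞) (pd k f) :=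
  (hf.fderiv_right (by simp)).clm_apply contDiff_const
lemma lap_contDiff {f : E4 → E} (hf : ContDiff ℝ (⊤ : ℕ∞) f) : ContDiff ℝ (⊤ : ℕ∞) (lap f) := by
  unfold lap
  exact ContDiff.sum fun k _ => (pd_contDiff (pd_contDiff hf k) k)
lemma pd_pi {ι : Type*} [Fintype ι] {F : E4 → ι → E} (hF : ∀ i, Differentiable ℝ (fun y => F y i))
    (k : Fin 4) : pd k F = fun y i => pd k (fun z => F z i) y := by
  funext y
  show fderiv ℝ (fun y i => F y i) y _ = _
  rw [fderiv_pi fun i => (hF i).differentiableAt]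
  rfl
lemma lap_pi {ι : Type*} [Fintype ι] {F : E4 → ι → E} (hF : ∀ i, ContDiff ℝ (⊤ : ℕ∞) (fun y => F y i)) :
    lap F = fun y i => lap (fun z => F z i) y := by
  have h1 : ∀ i, Differentiable ℝ (fun y => F y i) := fun i => (hF i).differentiable (by simp)
  unfold lap
  funext y i
  rw [Finset.sum_apply]
  refine Finset.sum_congr rfl fun k _ => ?_
  rw [pd_pi h1 k,
    pd_pi (F := fun y i => pd k (fun z => F z i) y)
      (fun i => (pd_contDiff (hF i) k).differentiable (by simp)) k]
lemma pd_pi2 {ι ι' : Type*} [Fintype ι] [Fintype ι'] {F : E4 → ι → ι' → ℝ}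
    (hF : ∀ i j, ContDiff ℝ (⊤ : ℕ∞) (fun y => F y i j)) (k : Fin 4) :
    pd k F = fun y i j => pd k (fun z => F z i j) y := by
  have h1 : ∀ i, Differentiable ℝ (fun y => F y i) :=
    fun i => differentiable_pi.mpr fun j => (hF i j).differentiable (by simp)
  rw [pd_pi h1 k]
  funext y i
  rw [pd_pi (fun j => (hF i j).differentiable (by simp)) k]
lemma lap_pi2 {ι ι' : Type*} [Fintype ι] [Fintype ι'] {F : E4 → ι → ι' → ℝ}
    (hF : ∀ i j, ContDiff ℝ (⊤ : ℕ∞) (fun y => F y i j)) :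
    lap F = fun y i j => lap (fun z => F z i j) y := by
  have h1 : ∀ i, ContDiff ℝ (⊤ : ℕ∞) (fun y => F y i) := fun i => contDiff_pi.mpr fun j => hF i j
  rw [lap_pi h1]
  funext y i
  rw [lap_pi (fun j => hF i j)]
lemma pd_comm {f : E4 → E} (hf : ContDiff ℝ (⊤ : ℕ∞) f) (k l : Fin 4) (x : E4) :
    pd k (pd l f) x = pd l (pd k f) x := by
  have hsym := hf.contDiffAt.isSymmSndFDerivAt (x := x) (by rw [minSmoothness_of_isRCLikeNormedField]; exact WithTop.coe_le_coe.mpr le_top)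
  have hd : Differentiable ℝ (fderiv ℝ f) :=
    (hf.fderiv_right (m := 1) (WithTop.coe_le_coe.mpr le_top)).differentiable (by simp)
  have h1 : ∀ (kk : Fin 4) (v : E4), pd kk (fun y => fderiv ℝ f y v) x
      = fderiv ℝ (fderiv ℝ f) x (EuclideanSpace.single kk 1) v := by
    intro kk v
    show fderiv ℝ (fun y => (fderiv ℝ f y) v) x _ = _
    rw [fderiv_clm_apply (hd.differentiableAt) (differentiableAt_const v)]
    simp
  show pd k (fun y => fderiv ℝ f y _) x = pd l (fun y => fderiv ℝ f y _) x
  rw [h1, h1]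
  exact hsym _ _
lemma pd_add {f g : E4 → E} (hf : Differentiable ℝ f) (hg : Differentiable ℝ g) (k : Fin 4) :
    pd k (fun y => f y + g y) = fun y => pd k f y + pd k g y := by
  funext y; show fderiv ℝ _ y _ = _
  rw [fderiv_fun_add (hf y) (hg y)]; rfl
lemma pd_sub {f g : E4 → E} (hf : Differentiable ℝ f) (hg : Differentiable ℝ g) (k : Fin 4) :
    pd k (fun y => f y - g y) = fun y => pd k f y - pd k g y := by
  funext y; show fderiv ℝ _ y _ = _
  rw [fderiv_fun_sub (hf y) (hg y)]; rfl
lemma pd_mul {f g : E4 → ℝ} (hf : Differentiable ℝ f) (hg : Differentiable ℝ g) (k : Fin 4) :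
    pd k (fun y => f y * g y) = fun y => pd k f y * g y + f y * pd k g y := by
  funext y; show fderiv ℝ _ y _ = _
  rw [fderiv_fun_mul (hf y) (hg y)]
  show (f y • fderiv ℝ g y + g y • fderiv ℝ f y) _ = _
  simp [pd]; ring
lemma pd_const_mul (c : ℝ) {g : E4 → ℝ} (hg : Differentiable ℝ g) (k : Fin 4) :
    pd k (fun y => c * g y) = fun y => c * pd k g y := by
  have := pd_mul (f := fun _ => c) (differentiable_const c) hg k
  rw [this]
  funext y
  have : pd k (fun _ : E4 => c) y = 0 := by
    show fderiv ℝ _ y _ = _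
    rw [fderiv_fun_const]; rfl
  rw [this]; ring
lemma pd_sum {ι : Type*} (s : Finset ι) {f : ι → E4 → E} (hf : ∀ j, Differentiable ℝ (f j))
    (k : Fin 4) : pd k (fun y => ∑ j ∈ s, f j y) = fun y => ∑ j ∈ s, pd k (f j) y := by
  funext y; show fderiv ℝ _ y _ = _
  rw [fderiv_fun_sum fun j _ => (hf j y)]
  simp [pd]
lemma pd_sum_mul {ι : Type*} (s : Finset ι) {f g : ι → E4 → ℝ}
    (hf : ∀ j, Differentiable ℝ (f j)) (hg : ∀ j, Differentiable ℝ (g j)) (k : Fin 4) :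
    pd k (fun y => ∑ j ∈ s, f j y * g j y)
      = fun y => ∑ j ∈ s, (pd k (f j) y * g j y + f j y * pd k (g j) y) := by
  rw [pd_sum s (f := fun j y => f j y * g j y) (fun j => (hf j).mul (hg j)) k]
  funext y
  exact Finset.sum_congr rfl fun j _ => by rw [pd_mul (hf j) (hg j)]
lemma pd_sum_mul2 {ι : Type*} (s : Finset ι) {f g : ι → E4 → ℝ}
    (hf : ∀ j, ContDiff ℝ (⊤ : ℕ∞) (f j)) (hg : ∀ j, ContDiff ℝ (⊤ : ℕ∞) (g j)) (k : Fin 4) :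
    pd k (pd k (fun y => ∑ j ∈ s, f j y * g j y))
      = fun x => ∑ j ∈ s, (pd k (pd k (f j)) x * g j x
          + pd k (f j) x * pd k (g j) x + pd k (f j) x * pd k (g j) x
          + f j x * pd k (pd k (g j)) x) := by
  have hf' : ∀ j, Differentiable ℝ (f j) := fun j => (hf j).differentiable (by simp)
  have hg' : ∀ j, Differentiable ℝ (g j) := fun j => (hg j).differentiable (by simp)
  rw [pd_sum_mul s hf' hg' k]
  rw [pd_sum s (fun j => (((pd_contDiff (hf j) k).mul (hg j)).add
      ((hf j).mul (pd_contDiff (hg j) k))).differentiable (by simp)) k]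
  funext x
  refine Finset.sum_congr rfl fun j _ => ?_
  rw [pd_add (((pd_contDiff (hf j) k).mul (hg j)).differentiable (by simp))
      (((hf j).mul (pd_contDiff (hg j) k)).differentiable (by simp)) k,
    pd_mul ((pd_contDiff (hf j) k).differentiable (by simp)) (hg' j) k,
    pd_mul (hf' j) ((pd_contDiff (hg j) k).differentiable (by simp)) k]
  ring
lemma sum_antisym {n : ℕ} (f : Fin n → Fin n → ℝ) (hf : ∀ k l, f k l = - f l k) :
    ∑ k : Fin n, ∑ l : Fin n, f k l = 0 := by
  have h : ∑ k : Fin n, ∑ l : Fin n, f k l = -∑ k : Fin n, ∑ l : Fin n, f k l := by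
    conv_lhs => rw [Finset.sum_comm]
    rw [← Finset.sum_neg_distrib]
    refine Finset.sum_congr rfl fun l _ => ?_
    rw [← Finset.sum_neg_distrib]
    exact Finset.sum_congr rfl fun k _ => hf _ _
  linarith
lemma pd_comb7 {s1 s2 s3 s4 s5 s6 s7 : E4 → ℝ} (h1 : ContDiff ℝ (⊤ : ℕ∞) s1) (h2 : ContDiff ℝ (⊤ : ℕ∞) s2)
    (h3 : ContDiff ℝ (⊤ : ℕ∞) s3) (h4 : ContDiff ℝ (⊤ : ℕ∞) s4) (h5 : ContDiff ℝ (⊤ : ℕ∞) s5)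
    (h6 : ContDiff ℝ (⊤ : ℕ∞) s6) (h7 : ContDiff ℝ (⊤ : ℕ∞) s7) (k : Fin 4) :
    pd k (fun y => s1 y - s2 y + s3 y - s4 y + s5 y - s6 y - s7 y)
      = fun x => pd k s1 x - pd k s2 x + pd k s3 x - pd k s4 x + pd k s5 x
          - pd k s6 x - pd k s7 x := by
  have d1 := h1.differentiable (by simp)
  have d2 := h2.differentiable (by simp)
  have d3 := h3.differentiable (by simp)
  have d4 := h4.differentiable (by simp)
  have d5 := h5.differentiable (by simp)
  have d6 := h6.differentiable (by simp)
  have d7 := h7.differentiable (by simp)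
  have e7 := pd_sub (f := fun y => s1 y - s2 y + s3 y - s4 y + s5 y - s6 y) (g := s7)
    (((((d1.sub d2).add d3).sub d4).add d5).sub d6) d7 k
  have e6 := pd_sub (f := fun y => s1 y - s2 y + s3 y - s4 y + s5 y) (g := s6)
    ((((d1.sub d2).add d3).sub d4).add d5) d6 k
  have e5 := pd_add (f := fun y => s1 y - s2 y + s3 y - s4 y) (g := s5)
    (((d1.sub d2).add d3).sub d4) d5 k
  have e4 := pd_sub (f := fun y => s1 y - s2 y + s3 y) (g := s4)
    ((d1.sub d2).add d3) d4 k
  have e3 := pd_add (f := fun y => s1 y - s2 y) (g := s3) (d1.sub d2) d3 k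
  have e2 := pd_sub (f := s1) (g := s2) d1 d2 k
  funext x
  rw [e7]
  simp only []
  rw [e6, e5, e4, e3, e2]
end helpers

/-- `V ⋅ ∇u`, component `j`. -/
def GS {m : ℕ} (V : E4 → Fin 4 → Fin m → Fin m → ℝ) (u : E4 → Fin m → ℝ) (j : Fin m) :
    E4 → ℝ :=
  fun z => ∑ l : Fin 4, ∑ r, V z l j r * pd l (fun y => u y r) z

/-- `w ∇u` in direction `k`, component `j`. -/
def WS {m : ℕ} (w : E4 → Fin m → Fin m → ℝ) (u : E4 → Fin m → ℝ) (k : Fin 4) (j : Fin m) :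
    E4 → ℝ :=
  fun y => ∑ r, w y j r * pd k (fun z => u z r) y

/-- `A Δu`, component `i`. -/
def MS {m : ℕ} (A : E4 → Fin m → Fin m → ℝ) (u : E4 → Fin m → ℝ) (i : Fin m) : E4 → ℝ :=
  fun z => ∑ j, A z i j * lap (fun y => u y j) z

/-- Scalar component `i` of the `k`-th entry of the conserved current. -/
def EB {m : ℕ} (A : E4 → Fin m → Fin m → ℝ) (Bf : E4 → Fin 4 → Fin 4 → Fin m → Fin m → ℝ)
    (u : E4 → Fin m → ℝ) (V : E4 → Fin 4 → Fin m → Fin m → ℝ) (w : E4 → Fin m → Fin m → ℝ)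
    (k : Fin 4) (i : Fin m) : E4 → ℝ :=
  fun y =>
    pd k (MS A u i) y
    - 2 * ∑ j, pd k (fun z => A z i j) y * lap (fun z => u z j) y
    + ∑ j, lap (fun z => A z i j) y * pd k (fun z => u z j) y
    - ∑ j, A y i j * WS w u k j y
    + ∑ j, pd k (fun z => A z i j) y * GS V u j y
    - ∑ j, A y i j * pd k (GS V u j) y
    - ∑ l : Fin 4, ∑ j, Bf y k l i j * pd l (fun z => u z j) y

/-- If `A` takes invertible matrix values and, together with the
antisymmetric `B`, satisfies the linear equation `∇ΔA + ΔA V − ∇A w + A W = curl B`,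
then `u` solves `Δ²u = Δ(V⋅∇u) + div(w∇u) + W⋅∇u` if and only if the conservation law
`div[∇(AΔu) − 2∇A Δu + ΔA ∇u − A w ∇u + ∇A(V⋅∇u) − A∇(V⋅∇u) − B⋅∇u] = 0` holds. -/
theorem stmt2 {m : ℕ} (A : E4 → Fin m → Fin m → ℝ)
    (B : E4 → Fin 4 → Fin 4 → Fin m → Fin m → ℝ)
    (u : E4 → Fin m → ℝ)
    (V : E4 → Fin 4 → Fin m → Fin m → ℝ) (w : E4 → Fin m → Fin m → ℝ)
    (W : E4 → Fin 4 → Fin m → Fin m → ℝ)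
    (hA : ContDiff ℝ (⊤ : ℕ∞) A) (hB : ContDiff ℝ (⊤ : ℕ∞) B) (hu : ContDiff ℝ (⊤ : ℕ∞) u)
    (hV : ContDiff ℝ (⊤ : ℕ∞) V) (hw : ContDiff ℝ (⊤ : ℕ∞) w) (hW : ContDiff ℝ (⊤ : ℕ∞) W)
    (hBanti : ∀ x k l, B x k l = - B x l k)
    (hAinv : ∀ x : E4, IsUnit (Matrix.of (A x)))
    (hlin : ∀ (x : E4) (k : Fin 4),
      pd k (lap A) x + mmul (lap A x) (V x k) - mmul (pd k A x) (w x) + mmul (A x) (W x k)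
        = ∑ l : Fin 4, pd l (fun y => B y l k) x) :
    (∀ x : E4, bilap u x
        = lap (fun y => ∑ l : Fin 4, mvec (V y l) (pd l u y)) x
          + ∑ k : Fin 4, pd k (fun y => mvec (w y) (pd k u y)) x
          + ∑ k : Fin 4, mvec (W x k) (pd k u x))
      ↔ (∀ x : E4,
          ∑ k : Fin 4, pd k (fun y =>
            pd k (fun z => mvec (A z) (lap u z)) y
            - (2 : ℝ) • mvec (pd k A y) (lap u y)
            + mvec (lap A y) (pd k u y)
            - mvec (A y) (mvec (w y) (pd k u y))
            + mvec (pd k A y) (∑ l : Fin 4, mvec (V y l) (pd l u y))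
            - mvec (A y) (pd k (fun z => ∑ l : Fin 4, mvec (V z l) (pd l u z)) y)
            - ∑ l : Fin 4, mvec (B y k l) (pd l u y)) x = 0) := by
  -- component smoothness
  have ha : ∀ i j, ContDiff ℝ (⊤ : ℕ∞) (fun y => A y i j) :=
    fun i j => contDiff_pi.mp (contDiff_pi.mp hA i) j
  have hu' : ∀ j, ContDiff ℝ (⊤ : ℕ∞) (fun y => u y j) := fun j => contDiff_pi.mp hu j
  have hvc : ∀ l i j, ContDiff ℝ (⊤ : ℕ∞) (fun y => V y l i j) :=
    fun l i j => contDiff_pi.mp (contDiff_pi.mp (contDiff_pi.mp hV l) i) j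
  have hwc : ∀ i j, ContDiff ℝ (⊤ : ℕ∞) (fun y => w y i j) :=
    fun i j => contDiff_pi.mp (contDiff_pi.mp hw i) j
  have hWc : ∀ l i j, ContDiff ℝ (⊤ : ℕ∞) (fun y => W y l i j) :=
    fun l i j => contDiff_pi.mp (contDiff_pi.mp (contDiff_pi.mp hW l) i) j
  have hbc : ∀ k l i j, ContDiff ℝ (⊤ : ℕ∞) (fun y => B y k l i j) :=
    fun k l i j =>
      contDiff_pi.mp (contDiff_pi.mp (contDiff_pi.mp (contDiff_pi.mp hB k) l) i) j
  -- derived smoothness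
  have hGs : ∀ j, ContDiff ℝ (⊤ : ℕ∞) (GS V u j) := fun j =>
    ContDiff.sum fun l _ => ContDiff.sum fun r _ => (hvc l j r).mul (pd_contDiff (hu' r) l)
  have hWS : ∀ k j, ContDiff ℝ (⊤ : ℕ∞) (WS w u k j) := fun k j =>
    ContDiff.sum fun r _ => (hwc j r).mul (pd_contDiff (hu' r) k)
  have hMS : ∀ i, ContDiff ℝ (⊤ : ℕ∞) (MS A u i) := fun i =>
    ContDiff.sum fun j _ => (ha i j).mul (lap_contDiff (hu' j))
  -- pi expansions
  have eU : ∀ k, pd k u = fun y j => pd k (fun z => u z j) y :=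
    fun k => pd_pi (fun j => (hu' j).differentiable (by simp)) k
  have eLU : lap u = fun y j => lap (fun z => u z j) y := lap_pi hu'
  have eA : ∀ k, pd k A = fun y i j => pd k (fun z => A z i j) y := fun k => pd_pi2 ha k
  have eLA : lap A = fun y i j => lap (fun z => A z i j) y := lap_pi2 ha
  have eBIL : bilap u = fun y j => bilap (fun z => u z j) y := by
    show lap (lap u) = _
    rw [eLU]
    exact lap_pi (fun j => lap_contDiff (hu' j))
  have eG : (fun y => ∑ l : Fin 4, mvec (V y l) (pd l u y)) = fun y j => GS V u j y := by
    funext y j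
    simp only [Finset.sum_apply, mvec, eU, GS]
  have ePG : ∀ k, pd k (fun y => ∑ l : Fin 4, mvec (V y l) (pd l u y))
      = fun y j => pd k (GS V u j) y := by
    intro k
    rw [eG]
    exact pd_pi (fun j => (hGs j).differentiable (by simp)) k
  have eLG : lap (fun y => ∑ l : Fin 4, mvec (V y l) (pd l u y))
      = fun y j => lap (GS V u j) y := by
    rw [eG]; exact lap_pi hGs
  have eW : ∀ k, (fun y => mvec (w y) (pd k u y)) = fun y j => WS w u k j y := by
    intro k; funext y j
    simp only [mvec, eU, WS]
  have ePW : ∀ k, pd k (fun y => mvec (w y) (pd k u y)) = fun y j => pd k (WS w u k j) y := by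
    intro k
    rw [eW k]
    exact pd_pi (fun j => (hWS k j).differentiable (by simp)) k
  have eM : (fun z => mvec (A z) (lap u z)) = fun z i => MS A u i z := by
    funext z i
    simp only [mvec, eLU, MS]
  have ePM : ∀ k, pd k (fun z => mvec (A z) (lap u z)) = fun y i => pd k (MS A u i) y := by
    intro k
    rw [eM]
    exact pd_pi (fun i => (hMS i).differentiable (by simp)) k
  -- the bracket in scalar component form
  have hEBsm : ∀ k i, ContDiff ℝ (⊤ : ℕ∞) (EB A B u V w k i) := by
    intro k i
    refine ContDiff.sub (ContDiff.sub (ContDiff.add (ContDiff.sub (ContDiff.add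
      (ContDiff.sub (pd_contDiff (hMS i) k) ?_) ?_) ?_) ?_) ?_) ?_
    · exact (contDiff_const).mul (ContDiff.sum fun j _ =>
        (pd_contDiff (ha i j) k).mul (lap_contDiff (hu' j)))
    · exact ContDiff.sum fun j _ => (lap_contDiff (ha i j)).mul (pd_contDiff (hu' j) k)
    · exact ContDiff.sum fun j _ => (ha i j).mul (hWS k j)
    · exact ContDiff.sum fun j _ => (pd_contDiff (ha i j) k).mul (hGs j)
    · exact ContDiff.sum fun j _ => (ha i j).mul (pd_contDiff (hGs j) k)
    · exact ContDiff.sum fun l _ => ContDiff.sum fun j _ =>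
        (hbc k l i j).mul (pd_contDiff (hu' j) l)
  have hbr : ∀ k : Fin 4, (fun y =>
        pd k (fun z => mvec (A z) (lap u z)) y
        - (2 : ℝ) • mvec (pd k A y) (lap u y)
        + mvec (lap A y) (pd k u y)
        - mvec (A y) (mvec (w y) (pd k u y))
        + mvec (pd k A y) (∑ l : Fin 4, mvec (V y l) (pd l u y))
        - mvec (A y) (pd k (fun z => ∑ l : Fin 4, mvec (V z l) (pd l u z)) y)
        - ∑ l : Fin 4, mvec (B y k l) (pd l u y))
      = fun y i => EB A B u V w k i y := by
    intro k
    funext y i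
    simp only [ePM, ePG]
    simp only [Pi.add_apply, Pi.sub_apply, Pi.smul_apply, smul_eq_mul, Finset.sum_apply,
      mvec, eA, eLA, eU, eLU, EB, WS, GS, MS, Finset.mul_sum]
  -- the key pointwise identity
  have key : ∀ x : E4,
      (∑ k : Fin 4, pd k (fun y =>
        pd k (fun z => mvec (A z) (lap u z)) y
        - (2 : ℝ) • mvec (pd k A y) (lap u y)
        + mvec (lap A y) (pd k u y)
        - mvec (A y) (mvec (w y) (pd k u y))
        + mvec (pd k A y) (∑ l : Fin 4, mvec (V y l) (pd l u y))
        - mvec (A y) (pd k (fun z => ∑ l : Fin 4, mvec (V z l) (pd l u z)) y)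
        - ∑ l : Fin 4, mvec (B y k l) (pd l u y)) x)
      = (Matrix.of (A x)).mulVec (fun j =>
          bilap (fun z => u z j) x - lap (GS V u j) x
          - (∑ k : Fin 4, pd k (WS w u k j) x)
          - ∑ k : Fin 4, ∑ r, W x k j r * pd k (fun z => u z r) x) := by
    intro x
    funext i
    rw [Finset.sum_apply]
    have ePD : ∀ k : Fin 4, pd k (fun y i' => EB A B u V w k i' y)
        = fun y i' => pd k (EB A B u V w k i') y :=
      fun k => pd_pi (fun i' => (hEBsm k i').differentiable (by simp)) k
    simp only [hbr, ePD]
    have mulv : (Matrix.of (A x)).mulVec (fun j =>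
        bilap (fun z => u z j) x - lap (GS V u j) x
        - (∑ k : Fin 4, pd k (WS w u k j) x)
        - ∑ k : Fin 4, ∑ r, W x k j r * pd k (fun z => u z r) x) i
      = ∑ j, A x i j * (bilap (fun z => u z j) x - lap (GS V u j) x
        - (∑ k : Fin 4, pd k (WS w u k j) x)
        - ∑ k : Fin 4, ∑ r, W x k j r * pd k (fun z => u z r) x) := rfl
    rw [mulv]
    -- split the seven pieces
    have hsp : ∀ k : Fin 4, pd k (EB A B u V w k i) x
        = pd k (pd k (MS A u i)) x
        - pd k (fun y => 2 * ∑ j, pd k (fun z => A z i j) y * lap (fun z => u z j) y) x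
        + pd k (fun y => ∑ j, lap (fun z => A z i j) y * pd k (fun z => u z j) y) x
        - pd k (fun y => ∑ j, A y i j * WS w u k j y) x
        + pd k (fun y => ∑ j, pd k (fun z => A z i j) y * GS V u j y) x
        - pd k (fun y => ∑ j, A y i j * pd k (GS V u j) y) x
        - pd k (fun y => ∑ l : Fin 4, ∑ j, B y k l i j * pd l (fun z => u z j) y) x := by
      intro k
      exact congrFun (pd_comb7
        (pd_contDiff (hMS i) k)
        (contDiff_const.mul (ContDiff.sum fun j _ =>
          (pd_contDiff (ha i j) k).mul (lap_contDiff (hu' j))))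
        (ContDiff.sum fun j _ => (lap_contDiff (ha i j)).mul (pd_contDiff (hu' j) k))
        (ContDiff.sum fun j _ => (ha i j).mul (hWS k j))
        (ContDiff.sum fun j _ => (pd_contDiff (ha i j) k).mul (hGs j))
        (ContDiff.sum fun j _ => (ha i j).mul (pd_contDiff (hGs j) k))
        (ContDiff.sum fun l _ => ContDiff.sum fun j _ =>
          (hbc k l i j).mul (pd_contDiff (hu' j) l)) k) x
    have Q1 : ∀ k : Fin 4, pd k (pd k (MS A u i)) x
        = ∑ j, (pd k (pd k (fun z => A z i j)) x * lap (fun z => u z j) x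
            + pd k (fun z => A z i j) x * pd k (lap (fun z => u z j)) x
            + pd k (fun z => A z i j) x * pd k (lap (fun z => u z j)) x
            + A x i j * pd k (pd k (lap (fun z => u z j))) x) :=
      fun k => congrFun (pd_sum_mul2 Finset.univ (f := fun j => fun z => A z i j)
        (g := fun j => lap (fun z => u z j)) (fun j => ha i j)
        (fun j => lap_contDiff (hu' j)) k) x
    have Q2 : ∀ k : Fin 4,
        pd k (fun y => 2 * ∑ j, pd k (fun z => A z i j) y * lap (fun z => u z j) y) x
        = ∑ j, (pd k (pd k (fun z => A z i j)) x * lap (fun z => u z j) x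
            + pd k (pd k (fun z => A z i j)) x * lap (fun z => u z j) x
            + pd k (fun z => A z i j) x * pd k (lap (fun z => u z j)) x
            + pd k (fun z => A z i j) x * pd k (lap (fun z => u z j)) x) := by
      intro k
      have hg : Differentiable ℝ
          (fun y => ∑ j, pd k (fun z => A z i j) y * lap (fun z => u z j) y) :=
        (ContDiff.sum fun j _ =>
          (pd_contDiff (ha i j) k).mul (lap_contDiff (hu' j))).differentiable (by simp)
      have h2 : pd k (fun y => 2 * ∑ j, pd k (fun z => A z i j) y * lap (fun z => u z j) y) x
          = 2 * pd k (fun y => ∑ j, pd k (fun z => A z i j) y * lap (fun z => u z j) y) x :=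
        congrFun (pd_const_mul 2 hg k) x
      have h3 : pd k (fun y => ∑ j, pd k (fun z => A z i j) y * lap (fun z => u z j) y) x
          = ∑ j, (pd k (pd k (fun z => A z i j)) x * lap (fun z => u z j) x
              + pd k (fun z => A z i j) x * pd k (lap (fun z => u z j)) x) :=
        congrFun (pd_sum_mul Finset.univ (f := fun j => pd k (fun z => A z i j))
          (g := fun j => lap (fun z => u z j))
          (fun j => (pd_contDiff (ha i j) k).differentiable (by simp))
          (fun j => (lap_contDiff (hu' j)).differentiable (by simp)) k) x
      rw [h2, h3, Finset.mul_sum]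
      exact Finset.sum_congr rfl fun j _ => by ring
    have Q3 : ∀ k : Fin 4,
        pd k (fun y => ∑ j, lap (fun z => A z i j) y * pd k (fun z => u z j) y) x
        = ∑ j, (pd k (lap (fun z => A z i j)) x * pd k (fun z => u z j) x
            + lap (fun z => A z i j) x * pd k (pd k (fun z => u z j)) x) :=
      fun k => congrFun (pd_sum_mul Finset.univ (f := fun j => lap (fun z => A z i j))
        (g := fun j => pd k (fun z => u z j))
        (fun j => (lap_contDiff (ha i j)).differentiable (by simp))
        (fun j => (pd_contDiff (hu' j) k).differentiable (by simp)) k) x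
    have Q4 : ∀ k : Fin 4,
        pd k (fun y => ∑ j, A y i j * WS w u k j y) x
        = ∑ j, (pd k (fun z => A z i j) x * WS w u k j x
            + A x i j * pd k (WS w u k j) x) :=
      fun k => congrFun (pd_sum_mul Finset.univ (f := fun j => fun z => A z i j)
        (g := fun j => WS w u k j)
        (fun j => (ha i j).differentiable (by simp))
        (fun j => (hWS k j).differentiable (by simp)) k) x
    have Q5 : ∀ k : Fin 4,
        pd k (fun y => ∑ j, pd k (fun z => A z i j) y * GS V u j y) x
        = ∑ j, (pd k (pd k (fun z => A z i j)) x * GS V u j x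
            + pd k (fun z => A z i j) x * pd k (GS V u j) x) :=
      fun k => congrFun (pd_sum_mul Finset.univ (f := fun j => pd k (fun z => A z i j))
        (g := fun j => GS V u j)
        (fun j => (pd_contDiff (ha i j) k).differentiable (by simp))
        (fun j => (hGs j).differentiable (by simp)) k) x
    have Q6 : ∀ k : Fin 4,
        pd k (fun y => ∑ j, A y i j * pd k (GS V u j) y) x
        = ∑ j, (pd k (fun z => A z i j) x * pd k (GS V u j) x
            + A x i j * pd k (pd k (GS V u j)) x) :=
      fun k => congrFun (pd_sum_mul Finset.univ (f := fun j => fun z => A z i j)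
        (g := fun j => pd k (GS V u j))
        (fun j => (ha i j).differentiable (by simp))
        (fun j => (pd_contDiff (hGs j) k).differentiable (by simp)) k) x
    have Q7 : ∀ k : Fin 4,
        pd k (fun y => ∑ l : Fin 4, ∑ j, B y k l i j * pd l (fun z => u z j) y) x
        = ∑ l : Fin 4, ∑ j, (pd k (fun z => B z k l i j) x * pd l (fun z => u z j) x
            + B x k l i j * pd k (pd l (fun z => u z j)) x) := by
      intro k
      have h1 : pd k (fun y => ∑ l : Fin 4, ∑ j, B y k l i j * pd l (fun z => u z j) y) x
          = ∑ l : Fin 4, pd k (fun y => ∑ j, B y k l i j * pd l (fun z => u z j) y) x :=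
        congrFun (pd_sum Finset.univ
          (f := fun l => fun y => ∑ j, B y k l i j * pd l (fun z => u z j) y)
          (fun l => (ContDiff.sum fun j _ =>
            (hbc k l i j).mul (pd_contDiff (hu' j) l)).differentiable (by simp)) k) x
      rw [h1]
      exact Finset.sum_congr rfl fun l _ =>
        congrFun (pd_sum_mul Finset.univ (f := fun j => fun z => B z k l i j)
          (g := fun j => pd l (fun z => u z j))
          (fun j => (hbc k l i j).differentiable (by simp))
          (fun j => (pd_contDiff (hu' j) l).differentiable (by simp)) k) x
    simp only [hsp, Q1, Q2, Q3, Q4, Q5, Q6, Q7]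
    simp only [Finset.sum_add_distrib, Finset.sum_sub_distrib, mul_sub, Finset.mul_sum]
    -- conversions
    have C3 : ∑ k : Fin 4, ∑ j, A x i j * pd k (pd k (lap (fun z => u z j))) x
        = ∑ j, A x i j * bilap (fun z => u z j) x := by
      rw [Finset.sum_comm]
      refine Finset.sum_congr rfl fun j _ => ?_
      rw [← Finset.mul_sum]
      rfl
    have C5 : ∑ k : Fin 4, ∑ j, lap (fun z => A z i j) x * pd k (pd k (fun z => u z j)) x
        = ∑ k : Fin 4, ∑ j, pd k (pd k (fun z => A z i j)) x * lap (fun z => u z j) x := by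
      rw [Finset.sum_comm]
      have e1 : ∀ j : Fin m,
          ∑ k : Fin 4, lap (fun z => A z i j) x * pd k (pd k (fun z => u z j)) x
          = lap (fun z => A z i j) x * lap (fun z => u z j) x := by
        intro j; rw [← Finset.mul_sum]; rfl
      have e2 : ∀ j : Fin m,
          lap (fun z => A z i j) x * lap (fun z => u z j) x
          = ∑ k : Fin 4, pd k (pd k (fun z => A z i j)) x * lap (fun z => u z j) x := by
        intro j
        rw [show lap (fun z => A z i j) x
          = ∑ k : Fin 4, pd k (pd k (fun z => A z i j)) x from rfl, Finset.sum_mul]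
      rw [Finset.sum_congr rfl fun j _ => (e1 j).trans (e2 j)]
      exact Finset.sum_comm
    have C7 : ∑ k : Fin 4, ∑ j, A x i j * pd k (WS w u k j) x
        = ∑ j, ∑ k : Fin 4, A x i j * pd k (WS w u k j) x := Finset.sum_comm
    have C10 : ∑ k : Fin 4, ∑ j, A x i j * pd k (pd k (GS V u j)) x
        = ∑ j, A x i j * lap (GS V u j) x := by
      rw [Finset.sum_comm]
      refine Finset.sum_congr rfl fun j _ => ?_
      rw [← Finset.mul_sum]
      rfl
    have CB2 : ∑ k : Fin 4, ∑ l : Fin 4, ∑ j, B x k l i j * pd k (pd l (fun z => u z j)) x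
        = 0 := by
      refine sum_antisym _ fun k l => ?_
      rw [← Finset.sum_neg_distrib]
      refine Finset.sum_congr rfl fun j _ => ?_
      have hb := congrFun (congrFun (hBanti x k l) i) j
      simp only [Pi.neg_apply] at hb
      rw [hb, pd_comm (hu' j) k l x]
      ring
    have hlin' : ∀ (l : Fin 4) (j : Fin m),
        pd l (lap (fun z => A z i j)) x
        + ∑ r, lap (fun z => A z i r) x * V x l r j
        - ∑ r, pd l (fun z => A z i r) x * w x r j
        + ∑ r, A x i r * W x l r j
        = ∑ k : Fin 4, pd k (fun z => B z k l i j) x := by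
      intro l j
      have h2 := congrFun (congrFun (hlin x l) i) j
      have eBB : ∀ k : Fin 4, pd k (fun y => B y k l)
          = fun y i j => pd k (fun z => B z k l i j) y :=
        fun k => pd_pi2 (fun i j => hbc k l i j) k
      have ePLA : pd l (fun y i j => lap (fun z => A z i j) y)
          = fun y i j => pd l (lap (fun z => A z i j)) y :=
        pd_pi2 (F := fun y i j => lap (fun z => A z i j) y)
          (fun i j => lap_contDiff (ha i j)) l
      simp only [Pi.add_apply, Pi.sub_apply, mmul, Finset.sum_apply, ePLA, eLA, eA, eBB] at h2
      exact h2
    have CB1 : ∑ k : Fin 4, ∑ l : Fin 4, ∑ j,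
          pd k (fun z => B z k l i j) x * pd l (fun z => u z j) x
        = ∑ k : Fin 4, ∑ j, pd k (lap (fun z => A z i j)) x * pd k (fun z => u z j) x
        + ∑ k : Fin 4, ∑ j, pd k (pd k (fun z => A z i j)) x * GS V u j x
        - ∑ k : Fin 4, ∑ j, pd k (fun z => A z i j) x * WS w u k j x
        + ∑ j, ∑ k : Fin 4, ∑ r, A x i j * (W x k j r * pd k (fun z => u z r) x) := by
      have s1 : ∑ k : Fin 4, ∑ l : Fin 4, ∑ j,
            pd k (fun z => B z k l i j) x * pd l (fun z => u z j) x
          = ∑ l : Fin 4, ∑ j,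
            (∑ k : Fin 4, pd k (fun z => B z k l i j) x) * pd l (fun z => u z j) x := by
        rw [Finset.sum_comm]
        refine Finset.sum_congr rfl fun l _ => ?_
        rw [Finset.sum_comm]
        exact Finset.sum_congr rfl fun j _ => (Finset.sum_mul _ _ _).symm
      rw [s1]
      have s2 : ∀ (l : Fin 4) (j : Fin m),
          (∑ k : Fin 4, pd k (fun z => B z k l i j) x) * pd l (fun z => u z j) x
          = pd l (lap (fun z => A z i j)) x * pd l (fun z => u z j) x
            + (∑ r, (lap (fun z => A z i r) x * V x l r j) * pd l (fun z => u z j) x)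
            - (∑ r, (pd l (fun z => A z i r) x * w x r j) * pd l (fun z => u z j) x)
            + ∑ r, (A x i r * W x l r j) * pd l (fun z => u z j) x := by
        intro l j
        rw [← hlin' l j, add_mul, sub_mul, add_mul, Finset.sum_mul, Finset.sum_mul,
          Finset.sum_mul]
      rw [Finset.sum_congr rfl fun l _ => Finset.sum_congr rfl fun j _ => s2 l j]
      simp only [Finset.sum_add_distrib, Finset.sum_sub_distrib]
      have D1 : ∑ l : Fin 4, ∑ j, pd l (lap (fun z => A z i j)) x * pd l (fun z => u z j) x
          = ∑ k : Fin 4, ∑ j, pd k (lap (fun z => A z i j)) x * pd k (fun z => u z j) x :=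
        rfl
      have D2 : ∑ l : Fin 4, ∑ j, ∑ r,
            (lap (fun z => A z i r) x * V x l r j) * pd l (fun z => u z j) x
          = ∑ k : Fin 4, ∑ j, pd k (pd k (fun z => A z i j)) x * GS V u j x := by
        have t1 : ∑ l : Fin 4, ∑ j, ∑ r,
              (lap (fun z => A z i r) x * V x l r j) * pd l (fun z => u z j) x
            = ∑ r, ∑ l : Fin 4, ∑ j,
              lap (fun z => A z i r) x * (V x l r j * pd l (fun z => u z j) x) := by
          rw [Finset.sum_congr rfl fun l (_ : l ∈ Finset.univ) =>
              (Finset.sum_comm (f := fun (j r : Fin m) =>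
              (lap (fun z => A z i r) x * V x l r j) * pd l (fun z => u z j) x))]
          rw [Finset.sum_comm]
          refine Finset.sum_congr rfl fun r _ => Finset.sum_congr rfl fun l _ =>
            Finset.sum_congr rfl fun j _ => by ring
        rw [t1]
        have t2 : ∀ r : Fin m, ∑ l : Fin 4, ∑ j,
              lap (fun z => A z i r) x * (V x l r j * pd l (fun z => u z j) x)
            = lap (fun z => A z i r) x * GS V u r x := by
          intro r
          rw [show GS V u r x = ∑ l : Fin 4, ∑ j, V x l r j * pd l (fun z => u z j) x from rfl,
            Finset.mul_sum]
          exact Finset.sum_congr rfl fun l _ => (Finset.mul_sum _ _ _).symm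
        rw [Finset.sum_congr rfl fun r _ => t2 r]
        have t3 : ∀ r : Fin m, lap (fun z => A z i r) x * GS V u r x
            = ∑ k : Fin 4, pd k (pd k (fun z => A z i r)) x * GS V u r x := by
          intro r
          rw [show lap (fun z => A z i r) x
            = ∑ k : Fin 4, pd k (pd k (fun z => A z i r)) x from rfl, Finset.sum_mul]
        rw [Finset.sum_congr rfl fun r _ => t3 r]
        exact Finset.sum_comm
      have D3 : ∑ l : Fin 4, ∑ j, ∑ r,
            (pd l (fun z => A z i r) x * w x r j) * pd l (fun z => u z j) x
          = ∑ k : Fin 4, ∑ j, pd k (fun z => A z i j) x * WS w u k j x := by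
        refine Finset.sum_congr rfl fun l _ => ?_
        rw [Finset.sum_comm]
        refine Finset.sum_congr rfl fun r _ => ?_
        rw [show WS w u l r x = ∑ j, w x r j * pd l (fun z => u z j) x from rfl,
          Finset.mul_sum]
        exact Finset.sum_congr rfl fun j _ => by ring
      have D4 : ∑ l : Fin 4, ∑ j, ∑ r,
            (A x i r * W x l r j) * pd l (fun z => u z j) x
          = ∑ j, ∑ k : Fin 4, ∑ r, A x i j * (W x k j r * pd k (fun z => u z r) x) := by
        rw [Finset.sum_congr rfl fun l (_ : l ∈ Finset.univ) =>
          (Finset.sum_comm (f := fun (j r : Fin m) =>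
            (A x i r * W x l r j) * pd l (fun z => u z j) x))]
        rw [Finset.sum_comm]
        refine Finset.sum_congr rfl fun r _ => Finset.sum_congr rfl fun l _ =>
          Finset.sum_congr rfl fun j _ => by ring
      rw [D1, D2, D3, D4]
    rw [C3, C5, C7, C10, CB2, CB1]
    ring
  constructor
  · intro h x
    rw [key x]
    have h0 : (fun j =>
        bilap (fun z => u z j) x - lap (GS V u j) x
        - (∑ k : Fin 4, pd k (WS w u k j) x)
        - ∑ k : Fin 4, ∑ r, W x k j r * pd k (fun z => u z r) x) = (0 : Fin m → ℝ) := by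
      funext j
      have hx := congrFun (h x) j
      simp only [eBIL, eLG, ePW] at hx
      simp only [Pi.add_apply, Finset.sum_apply, mvec, eU] at hx
      simp only [Pi.zero_apply]
      linarith [hx]
    rw [h0, Matrix.mulVec_zero]
  · intro h x
    have hinj := Matrix.mulVec_injective_iff_isUnit.mpr (hAinv x)
    have h1 : (Matrix.of (A x)).mulVec (fun j =>
        bilap (fun z => u z j) x - lap (GS V u j) x
        - (∑ k : Fin 4, pd k (WS w u k j) x)
        - ∑ k : Fin 4, ∑ r, W x k j r * pd k (fun z => u z r) x)
        = (Matrix.of (A x)).mulVec 0 := by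
      rw [Matrix.mulVec_zero, ← key x, h x]
    have hv := hinj h1
    funext j
    have hj := congrFun hv j
    simp only [Pi.zero_apply] at hj
    simp only [eBIL, eLG, ePW]
    simp only [Pi.add_apply, Finset.sum_apply, mvec, eU]
    linarith [hj]
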